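/- Let Ω ⊆ ℍ be an axially symmetric s-domain, let f, g : Ω → ℍ be slice regular, and let f∗g denote their regular product (the unique slice regular function on Ω whose restriction to a slice Ω ∩ L_I is given by the splitting formula). Then for every q ∈ Ω, (f∗g)(q) = f(q)·g(f(q)⁻¹·q·f(q)) if f(q) ≠ 0, and (f∗g)(q) = 0 if f(q) = 0. -/

import Mathlib

open Quaternion

noncomputable section

/-- The 2-sphere of imaginary units in the quaternions. -/
def SpH : Set ℍ[ℝ] := {q | q.re = 0 ∧ ‖q‖ = 1}

/-- The slice (complex plane) `L_I = {x + y I : x, y ∈ ℝ}`. -/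
def sliceL (I : ℍ[ℝ]) : Set ℍ[ℝ] := {q | ∃ x y : ℝ, q = (x : ℍ[ℝ]) + y • I}

/-- `f` has continuous partial derivatives on the `I`-slice part of `Ω` and satisfies the
Cauchy–Riemann equation `∂f/∂x + I ∂f/∂y = 0` there. -/
def SliceHolomorphicOn (I : ℍ[ℝ]) (f : ℍ[ℝ] → ℍ[ℝ]) (Ω : Set ℍ[ℝ]) : Prop :=
  ∃ fx fy : ℝ → ℝ → ℍ[ℝ],
    (∀ x y : ℝ, (x : ℍ[ℝ]) + y • I ∈ Ω →
      HasDerivAt (fun t : ℝ => f ((t : ℍ[ℝ]) + y • I)) (fx x y) x) ∧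
    (∀ x y : ℝ, (x : ℍ[ℝ]) + y • I ∈ Ω →
      HasDerivAt (fun t : ℝ => f ((x : ℍ[ℝ]) + t • I)) (fy x y) y) ∧
    ContinuousOn (fun p : ℝ × ℝ => fx p.1 p.2) {p : ℝ × ℝ | (p.1 : ℍ[ℝ]) + p.2 • I ∈ Ω} ∧
    ContinuousOn (fun p : ℝ × ℝ => fy p.1 p.2) {p : ℝ × ℝ | (p.1 : ℍ[ℝ]) + p.2 • I ∈ Ω} ∧
    ∀ x y : ℝ, (x : ℍ[ℝ]) + y • I ∈ Ω → fx x y + I * fy x y = 0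

/-- `f` is slice regular on `Ω`. -/
def SliceRegularOn (f : ℍ[ℝ] → ℍ[ℝ]) (Ω : Set ℍ[ℝ]) : Prop :=
  ∀ I ∈ SpH, SliceHolomorphicOn I f Ω

/-- `Ω` is axially symmetric. -/
def AxSymm (Ω : Set ℍ[ℝ]) : Prop :=
  ∀ (x y : ℝ), ∀ I ∈ SpH, (x : ℍ[ℝ]) + y • I ∈ Ω → ∀ J ∈ SpH, (x : ℍ[ℝ]) + y • J ∈ Ω

/-- `Ω` is an s-domain: a domain meeting the real axis whose slices are connected. -/
def IsSDomain (Ω : Set ℍ[ℝ]) : Prop :=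
  IsOpen Ω ∧ IsConnected Ω ∧ (∃ x : ℝ, (x : ℍ[ℝ]) ∈ Ω) ∧
    ∀ I ∈ SpH, IsConnected (Ω ∩ sliceL I)

/-- The axially symmetric completion of a set `S ⊆ ℍ`. -/
def symmComp (S : Set ℍ[ℝ]) : Set ℍ[ℝ] :=
  {q | ∃ (x y : ℝ) (I : ℍ[ℝ]), I ∈ SpH ∧ q = (x : ℍ[ℝ]) + y • I ∧
    ∃ J ∈ SpH, (x : ℍ[ℝ]) + y • J ∈ S}

/-- A domain of the slice `L_I`: a nonempty connected relatively open subset of `L_I`. -/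
def IsSliceDomain (I : ℍ[ℝ]) (D : Set ℍ[ℝ]) : Prop :=
  D ⊆ sliceL I ∧ IsConnected D ∧ IsOpen {p : ℝ × ℝ | (p.1 : ℍ[ℝ]) + p.2 • I ∈ D}

/-!
Representation formula: if `h` is slice regular on an axially symmetric s-domain and `I, L ∈ 𝕊`,
then `2 h(x + yL) = (1 - LI) h(x + yI) + (1 + LI) h(x - yI)`. Both sides, as functions of
`x + iy`, are holomorphic for the complex structure on `ℍ` given by left multiplication by `L`,
and they agree on the real axis, so they agree everywhere by the identity principle.

On `L_I` the splitting formula reads `(f ∗ g)(z) = F(z) g(z) + G(z) J g(z̄)`. Feeding this and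
`f = F + GJ` into the representation formula at `q = x + yL` gives, with `u = f(q)`,
`2 (f ∗ g)(q) = (u - LuI) g(x + yI) + (u + LuI) g(x - yI)`. This vanishes for `u = 0`, and for
`u ≠ 0` it is `u` times the representation formula for `g` at `x + y u⁻¹Lu = u⁻¹qu`.
-/

section PartialDerivatives

open Complex Filter Topology Asymptotics

variable {E : Type*} [NormedAddCommGroup E] [NormedSpace ℝ E]

theorem dist_mk_re_le_of_mem_uIcc {z w : ℂ} {s : ℝ} (hs : s ∈ Set.uIcc z.im w.im) :
    dist (⟨w.re, s⟩ : ℂ) z ≤ dist w z := by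
  rw [dist_eq_re_im, dist_eq_re_im]
  gcongr √(_ + ?_)
  simpa only [sq_abs] using pow_le_pow_left₀ (abs_nonneg _) (Set.abs_sub_left_of_mem_uIcc hs) 2

theorem hasFDerivAt_sub_re_of_hasDerivAt_im {v vy : ℂ → E} {z : ℂ}
    (hy : ∀ᶠ w in 𝓝 z, HasDerivAt (fun t : ℝ => v ⟨w.re, t⟩) (vy w) w.im)
    (hcy : ContinuousAt vy z) :
    HasFDerivAt (fun w => v w - v ⟨w.re, z.im⟩) (imCLM.smulRight (vy z)) z := by
  rw [hasFDerivAt_iff_isLittleO, isLittleO_iff]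
  intro c hc
  obtain ⟨δ, hδ, hball⟩ := Metric.eventually_nhds_iff_ball.1
    (hy.and (hcy.eventually (Metric.closedBall_mem_nhds _ hc)))
  filter_upwards [Metric.ball_mem_nhds z hδ] with w hw
  have hseg : ∀ s ∈ Set.uIcc z.im w.im, HasDerivWithinAt (fun t : ℝ => v ⟨w.re, t⟩ - t • vy z)
      (vy ⟨w.re, s⟩ - vy z) (Set.uIcc z.im w.im) s ∧ ‖vy ⟨w.re, s⟩ - vy z‖ ≤ c := by
    intro s hs
    obtain ⟨hd, hc⟩ := hball _ ((dist_mk_re_le_of_mem_uIcc hs).trans_lt hw)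
    refine ⟨(hd.sub (hasDerivAt_id s |>.smul_const (vy z))).hasDerivWithinAt.congr_deriv ?_, ?_⟩
    · simp
    · simpa [dist_eq_norm] using hc
  have hmvt := Convex.norm_image_sub_le_of_norm_hasDerivWithin_le (fun s hs => (hseg s hs).1)
    (fun s hs => (hseg s hs).2) (convex_uIcc _ _) Set.left_mem_uIcc Set.right_mem_uIcc
  calc _ = ‖v ⟨w.re, w.im⟩ - w.im • vy z - (v ⟨w.re, z.im⟩ - z.im • vy z)‖ := by
          congr 1
          simp only [ContinuousLinearMap.smulRight_apply, imCLM_apply, sub_im, sub_smul, eta]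
          abel
    _ ≤ c * ‖w.im - z.im‖ := hmvt
    _ ≤ c * ‖w - z‖ := by gcongr; simpa using abs_im_le_norm (w - z)

/-- Only the `y`-partial derivative needs to be continuous, and only at `z`: the increment splits
into a horizontal part, controlled by `hx`, and a vertical part, controlled by the mean value
inequality. -/
theorem hasFDerivAt_of_hasDerivAt_re_im {v : ℂ → E} {vx : E} {vy : ℂ → E} {z : ℂ}
    (hx : HasDerivAt (fun t : ℝ => v ⟨t, z.im⟩) vx z.re)
    (hy : ∀ᶠ w in 𝓝 z, HasDerivAt (fun t : ℝ => v ⟨w.re, t⟩) (vy w) w.im)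
    (hcy : ContinuousAt vy z) :
    HasFDerivAt v (reCLM.smulRight vx + imCLM.smulRight (vy z)) z := by
  have hre : HasFDerivAt (fun w : ℂ => v ⟨w.re, z.im⟩) (reCLM.smulRight vx) z :=
    (hx.hasFDerivAt.comp z reCLM.hasFDerivAt).congr_fderiv (by ext; simp)
  simpa only [Pi.add_def, add_sub_cancel] using
    hre.add (hasFDerivAt_sub_re_of_hasDerivAt_im hy hcy)

theorem hasDerivAt_of_hasDerivAt_re_im [NormedSpace ℂ E] [IsScalarTower ℝ ℂ E]
    {v : ℂ → E} {vx : E} {vy : ℂ → E} {z : ℂ}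
    (hx : HasDerivAt (fun t : ℝ => v ⟨t, z.im⟩) vx z.re)
    (hy : ∀ᶠ w in 𝓝 z, HasDerivAt (fun t : ℝ => v ⟨w.re, t⟩) (vy w) w.im)
    (hcy : ContinuousAt vy z) (hCR : vy z = I • vx) : HasDerivAt v vx z := by
  refine hasFDerivAt_of_restrictScalars ℝ (hasFDerivAt_of_hasDerivAt_re_im hx hy hcy) ?_
  ext w
  simp only [ContinuousLinearMap.coe_restrictScalars', ContinuousLinearMap.smulRight_apply,
    FunLike.coe_add, Pi.add_apply, reCLM_apply, imCLM_apply, hCR,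
    ContinuousLinearMap.toSpanSingleton_apply]
  conv_lhs => rw [← re_add_im w]
  rw [add_smul, mul_smul, ← coe_algebraMap, algebraMap_smul, algebraMap_smul]

end PartialDerivatives

open Complex Filter Topology in
theorem DifferentiableOn.eqOn_zero_of_eq_zero_on_reals {E : Type*} [NormedAddCommGroup E]
    [NormedSpace ℂ E] [CompleteSpace E] {v : ℂ → E} {U : Set ℂ} (hv : DifferentiableOn ℂ v U)
    (hU : IsOpen U) (hUc : IsPreconnected U) {x₀ : ℝ} (hx₀ : (x₀ : ℂ) ∈ U)
    (hre : ∀ x : ℝ, (x : ℂ) ∈ U → v x = 0) : Set.EqOn v 0 U := by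
  refine (hv.analyticOnNhd hU).eqOn_zero_of_preconnected_of_frequently_eq_zero hUc hx₀ ?_
  have hmap : Tendsto ((↑) : ℝ → ℂ) (𝓝[≠] x₀) (𝓝[≠] (x₀ : ℂ)) :=
    tendsto_nhdsWithin_of_tendsto_nhds_of_eventually_within _
      (continuous_ofReal.continuousAt.tendsto.mono_left nhdsWithin_le_nhds)
      (eventually_nhdsWithin_of_forall fun t ht => ofReal_injective.ne ht)
  refine hmap.frequently (Eventually.frequently ?_)
  have hU' : ∀ᶠ t : ℝ in 𝓝 x₀, (t : ℂ) ∈ U :=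
    continuous_ofReal.continuousAt.preimage_mem_nhds (hU.mem_nhds hx₀)
  exact (eventually_nhdsWithin_of_eventually_nhds hU').mono fun t ht => hre t ht

theorem re_mul_comm (a b : ℍ[ℝ]) : (a * b).re = (b * a).re := by
  simp only [re_mul]
  ring

theorem star_eq_neg_of_mem_SpH {I : ℍ[ℝ]} (hI : I ∈ SpH) : star I = -I :=
  Quaternion.star_eq_neg.2 hI.1

theorem normSq_of_mem_SpH {I : ℍ[ℝ]} (hI : I ∈ SpH) : normSq I = 1 := by
  rw [normSq_eq_norm_mul_self, hI.2, one_mul]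

theorem mul_self_of_mem_SpH {I : ℍ[ℝ]} (hI : I ∈ SpH) : I * I = -1 := by
  have h := star_mul_self I
  rw [star_eq_neg_of_mem_SpH hI, normSq_of_mem_SpH hI, neg_mul, neg_eq_iff_eq_neg] at h
  exact_mod_cast h

theorem neg_mem_SpH {I : ℍ[ℝ]} (hI : I ∈ SpH) : -I ∈ SpH :=
  ⟨by simp [hI.1], by rw [norm_neg, hI.2]⟩

theorem inv_mul_mul_mem_SpH {u L : ℍ[ℝ]} (hu : u ≠ 0) (hL : L ∈ SpH) : u⁻¹ * L * u ∈ SpH := by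
  refine ⟨?_, ?_⟩
  · rw [re_mul_comm, ← mul_assoc, mul_inv_cancel₀ hu, one_mul, hL.1]
  · rw [norm_mul, norm_mul, norm_inv, hL.2, mul_one, inv_mul_cancel₀ (norm_ne_zero_iff.2 hu)]

theorem mul_eq_neg_mul_of_perp {I J : ℍ[ℝ]} (hI : I ∈ SpH) (hJ : J ∈ SpH)
    (hperp : (I * star J).re = 0) : I * J = -(J * I) := by
  rw [star_eq_neg_of_mem_SpH hJ, mul_neg, re_neg, neg_eq_zero, ← Quaternion.star_eq_neg,
    star_mul, star_eq_neg_of_mem_SpH hI, star_eq_neg_of_mem_SpH hJ, neg_mul_neg] at hperp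
  rw [hperp, neg_neg]

theorem coe_I_mem_SpH : ((Complex.I : ℂ) : ℍ[ℝ]) ∈ SpH := by
  refine ⟨by simp [re_coeComplex], ?_⟩
  rw [← pow_left_inj₀ (norm_nonneg _) zero_le_one two_ne_zero, sq, ← normSq_eq_norm_mul_self,
    normSq_def']
  simp [re_coeComplex, imI_coeComplex, imJ_coeComplex, imK_coeComplex]

theorem exists_mem_SpH_eq_add_smul (q : ℍ[ℝ]) :
    ∃ (x y : ℝ) (L : ℍ[ℝ]), L ∈ SpH ∧ q = (x : ℍ[ℝ]) + y • L := by
  by_cases him : q.im = 0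
  · refine ⟨q.re, 0, _, coe_I_mem_SpH, ?_⟩
    rw [zero_smul, add_zero, ← add_zero (q.re : ℍ[ℝ]), ← him, Quaternion.re_add_im]
  · have hn : ‖q.im‖ ≠ 0 := norm_ne_zero_iff.2 him
    refine ⟨q.re, ‖q.im‖, ‖q.im‖⁻¹ • q.im, ⟨by simp, ?_⟩, ?_⟩
    · rw [norm_smul, norm_inv, norm_norm, inv_mul_cancel₀ hn]
    · rw [smul_smul, mul_inv_cancel₀ hn, one_smul, Quaternion.re_add_im]

def sliceMap (L : ℍ[ℝ]) (z : ℂ) : ℍ[ℝ] := z.re + z.im • L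

@[simp]
theorem sliceMap_ofReal (L : ℍ[ℝ]) (x : ℝ) : sliceMap L x = x := by
  simp [sliceMap]

theorem coe_liftAux (L : ℍ[ℝ]) (hL : L * L = -1) : ⇑(Complex.liftAux L hL) = sliceMap L := by
  funext z
  simp [sliceMap, Quaternion.algebraMap_def]

theorem norm_sliceMap {L : ℍ[ℝ]} (hL : L ∈ SpH) (z : ℂ) : ‖sliceMap L z‖ = ‖z‖ := by
  rw [← pow_left_inj₀ (norm_nonneg _) (norm_nonneg _) two_ne_zero, sq, ← normSq_eq_norm_mul_self,
    Complex.sq_norm, Complex.normSq_apply, sliceMap, Quaternion.normSq_add, normSq_coe,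
    normSq_smul, normSq_of_mem_SpH hL, Quaternion.star_smul, coe_mul_eq_smul, re_smul, re_smul,
    re_star, hL.1]
  ring

theorem isometry_sliceMap {L : ℍ[ℝ]} (hL : L ∈ SpH) : Isometry (sliceMap L) := by
  rw [← coe_liftAux L (mul_self_of_mem_SpH hL)]
  exact AddMonoidHomClass.isometry_of_norm _ fun z => by
    rw [coe_liftAux]; exact norm_sliceMap hL z

open ComplexConjugate

/-- Holomorphy, in Cauchy–Riemann form, for the complex structure `z • q = (z.re + z.im L) q`
on `ℍ`. -/
def CauchyRiemannOn (L : ℍ[ℝ]) (v : ℂ → ℍ[ℝ]) (U : Set ℂ) : Prop :=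
  ∃ vx vy : ℂ → ℍ[ℝ], (∀ z ∈ U, HasDerivAt (fun t : ℝ => v ⟨t, z.im⟩) (vx z) z.re) ∧
    (∀ z ∈ U, HasDerivAt (fun t : ℝ => v ⟨z.re, t⟩) (vy z) z.im) ∧
    ContinuousOn vy U ∧ ∀ z ∈ U, vy z = L * vx z

namespace CauchyRiemannOn

variable {L P C : ℍ[ℝ]} {v w : ℂ → ℍ[ℝ]} {U V : Set ℂ}

theorem mono (h : CauchyRiemannOn L v V) (hUV : U ⊆ V) : CauchyRiemannOn L v U := by
  obtain ⟨vx, vy, hx, hy, hcy, hCR⟩ := h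
  exact ⟨vx, vy, fun z hz => hx z (hUV hz), fun z hz => hy z (hUV hz), hcy.mono hUV,
    fun z hz => hCR z (hUV hz)⟩

theorem add (hv : CauchyRiemannOn L v U) (hw : CauchyRiemannOn L w U) :
    CauchyRiemannOn L (fun z => v z + w z) U := by
  obtain ⟨vx, vy, hvx, hvy, hcv, hCRv⟩ := hv
  obtain ⟨wx, wy, hwx, hwy, hcw, hCRw⟩ := hw
  exact ⟨vx + wx, vy + wy, fun z hz => (hvx z hz).add (hwx z hz),
    fun z hz => (hvy z hz).add (hwy z hz), hcv.add hcw,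
    fun z hz => by simp [hCRv z hz, hCRw z hz, mul_add]⟩

theorem sub (hv : CauchyRiemannOn L v U) (hw : CauchyRiemannOn L w U) :
    CauchyRiemannOn L (fun z => v z - w z) U := by
  obtain ⟨vx, vy, hvx, hvy, hcv, hCRv⟩ := hv
  obtain ⟨wx, wy, hwx, hwy, hcw, hCRw⟩ := hw
  exact ⟨vx - wx, vy - wy, fun z hz => (hvx z hz).sub (hwx z hz),
    fun z hz => (hvy z hz).sub (hwy z hz), hcv.sub hcw,
    fun z hz => by simp [hCRv z hz, hCRw z hz, mul_sub]⟩

theorem const_mul (h : CauchyRiemannOn P v U) (hC : L * C = C * P) :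
    CauchyRiemannOn L (fun z => C * v z) U := by
  obtain ⟨vx, vy, hx, hy, hcy, hCR⟩ := h
  exact ⟨fun z => C * vx z, fun z => C * vy z, fun z hz => (hx z hz).const_mul C,
    fun z hz => (hy z hz).const_mul C, continuousOn_const.mul hcy,
    fun z hz => by beta_reduce; rw [hCR z hz, ← mul_assoc, ← mul_assoc, hC]⟩

theorem comp_conj (h : CauchyRiemannOn P v U) :
    CauchyRiemannOn (-P) (fun z => v (conj z)) (conj ⁻¹' U) := by
  obtain ⟨vx, vy, hx, hy, hcy, hCR⟩ := h
  have hconj (x y : ℝ) : conj (⟨x, y⟩ : ℂ) = ⟨x, -y⟩ := Complex.ext rfl rfl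
  refine ⟨fun z => vx (conj z), fun z => -vy (conj z), fun z hz => ?_, fun z hz => ?_,
    (hcy.comp Complex.continuous_conj.continuousOn fun _ hz => hz).neg,
    fun z hz => by beta_reduce; rw [hCR _ hz, neg_mul]⟩
  · simpa only [hconj] using hx _ hz
  · simp only [hconj]
    exact ((hy _ hz).scomp z.im (hasDerivAt_neg z.im)).congr_deriv (neg_one_smul ℝ _)

theorem eqOn_zero (h : CauchyRiemannOn L v U) (hL : L ∈ SpH) (hU : IsOpen U)
    (hUc : IsPreconnected U) {x₀ : ℝ} (hx₀ : (x₀ : ℂ) ∈ U)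
    (hre : ∀ x : ℝ, (x : ℂ) ∈ U → v x = 0) : Set.EqOn v 0 U := by
  obtain ⟨vx, vy, hx, hy, hcy, hCR⟩ := h
  let ι := Complex.liftAux L (mul_self_of_mem_SpH hL)
  let _ : Module ℂ ℍ[ℝ] := Module.compHom ℍ[ℝ] ι.toRingHom
  let _ : NormedSpace ℂ ℍ[ℝ] := ⟨fun z q => by
    change ‖ι z * q‖ ≤ ‖z‖ * ‖q‖
    rw [norm_mul, coe_liftAux, norm_sliceMap hL]⟩
  have : IsScalarTower ℝ ℂ ℍ[ℝ] := ⟨fun r z q => by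
    change ι (r • z) * q = r • (ι z * q)
    rw [map_smul, smul_mul_assoc]⟩
  refine DifferentiableOn.eqOn_zero_of_eq_zero_on_reals (fun z hz => ?_) hU hUc hx₀ hre
  have hCRz : vy z = Complex.I • vx z := by
    change vy z = ι Complex.I * vx z
    rw [Complex.liftAux_apply_I, hCR z hz]
  have hy' := Filter.eventually_of_mem (hU.mem_nhds hz) hy
  exact (hasDerivAt_of_hasDerivAt_re_im (hx z hz) hy' (hcy.continuousAt (hU.mem_nhds hz))
    hCRz).differentiableAt.differentiableWithinAt

end CauchyRiemannOn

theorem eq_mul_of_add_mul_eq_zero {I a b : ℍ[ℝ]} (hI : I * I = -1) (h : a + I * b = 0) :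
    b = I * a := by
  rw [eq_neg_of_add_eq_zero_left h, mul_neg, ← mul_assoc, hI, neg_one_mul, neg_neg]

theorem SliceHolomorphicOn.cauchyRiemannOn {I : ℍ[ℝ]} {f : ℍ[ℝ] → ℍ[ℝ]} {Ω : Set ℍ[ℝ]}
    (h : SliceHolomorphicOn I f Ω) (hI : I * I = -1) :
    CauchyRiemannOn I (fun z => f (sliceMap I z)) (sliceMap I ⁻¹' Ω) := by
  obtain ⟨fx, fy, hx, hy, -, hcy, hCR⟩ := h
  have hreim : Continuous fun z : ℂ => (z.re, z.im) :=
    Complex.continuous_re.prodMk Complex.continuous_im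
  exact ⟨fun z => fx z.re z.im, fun z => fy z.re z.im, fun z hz => hx _ _ hz,
    fun z hz => hy _ _ hz, hcy.comp hreim.continuousOn fun _ hz => hz,
    fun z hz => eq_mul_of_add_mul_eq_zero hI (hCR _ _ hz)⟩

theorem range_sliceMap (I : ℍ[ℝ]) : Set.range (sliceMap I) = sliceL I := by
  ext q
  exact ⟨fun ⟨z, hz⟩ => ⟨z.re, z.im, hz.symm⟩, fun ⟨x, y, hq⟩ => ⟨⟨x, y⟩, hq.symm⟩⟩

theorem isPreconnected_preimage_sliceMap {I : ℍ[ℝ]} (hI : I ∈ SpH) {Ω : Set ℍ[ℝ]}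
    (h : IsPreconnected (Ω ∩ sliceL I)) : IsPreconnected (sliceMap I ⁻¹' Ω) := by
  rwa [← (isometry_sliceMap hI).isEmbedding.isInducing.isPreconnected_image,
    Set.image_preimage_eq_inter_range, range_sliceMap]

theorem mul_one_sub_mul_eq {I L : ℍ[ℝ]} (hI : I * I = -1) (hL : L * L = -1) :
    L * (1 - L * I) = (1 - L * I) * I := by
  rw [mul_sub, sub_mul, ← mul_assoc, hL, mul_assoc, hI]
  noncomm_ring

theorem mul_one_add_mul_eq {I L : ℍ[ℝ]} (hI : I * I = -1) (hL : L * L = -1) :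
    L * (1 + L * I) = (1 + L * I) * -I := by
  rw [mul_add, add_mul, ← mul_assoc, hL, mul_neg, mul_neg, mul_assoc, hI]
  noncomm_ring

theorem SliceRegularOn.representation_formula {Ω : Set ℍ[ℝ]} {h : ℍ[ℝ] → ℍ[ℝ]}
    (hreg : SliceRegularOn h Ω) (hΩ : IsSDomain Ω) (hax : AxSymm Ω) {I L : ℍ[ℝ]} (hI : I ∈ SpH)
    (hL : L ∈ SpH) {x y : ℝ} (hq : (x : ℍ[ℝ]) + y • L ∈ Ω) :
    2 * h (x + y • L) = (1 - L * I) * h (x + y • I) + (1 + L * I) * h (x + (-y) • I) := by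
  have hII := mul_self_of_mem_SpH hI
  have hLL := mul_self_of_mem_SpH hL
  set U := sliceMap I ⁻¹' Ω
  have hUL : U ⊆ sliceMap L ⁻¹' Ω := fun z hz => hax _ _ I hI hz L hL
  have hUconj : U ⊆ conj ⁻¹' U := fun z hz => by
    simpa [U, sliceMap, neg_smul] using hax _ _ I hI hz (-I) (neg_mem_SpH hI)
  have hhI := (hreg I hI).cauchyRiemannOn hII
  have hv : CauchyRiemannOn L (fun z => 2 * h (sliceMap L z) -
      ((1 - L * I) * h (sliceMap I z) + (1 + L * I) * h (sliceMap I (conj z)))) U :=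
    ((((hreg L hL).cauchyRiemannOn hLL).mono hUL).const_mul (by rw [mul_two, two_mul])).sub
      ((hhI.const_mul (mul_one_sub_mul_eq hII hLL)).add
        ((hhI.comp_conj.mono hUconj).const_mul (mul_one_add_mul_eq hII hLL)))
  obtain ⟨x₀, hx₀⟩ := hΩ.2.2.1
  have hzero := hv.eqOn_zero hL ((isometry_sliceMap hI).continuous.isOpen_preimage _ hΩ.1)
    (isPreconnected_preimage_sliceMap hI (hΩ.2.2.2 I hI).isPreconnected)
    (by simpa [U] using hx₀)
    (fun t _ => by simp only [Complex.conj_ofReal, sliceMap_ofReal]; noncomm_ring)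
    (show (⟨x, y⟩ : ℂ) ∈ U from hax x y L hL hq I hI)
  exact sub_eq_zero.1 hzero

theorem commute_of_mem_sliceL {I p : ℍ[ℝ]} (hp : p ∈ sliceL I) : Commute p I := by
  obtain ⟨x, y, rfl⟩ := hp
  exact (coe_commute x I).add_left ((Commute.refl I).smul_left y)

theorem star_add_smul {I : ℍ[ℝ]} (hI : I ∈ SpH) (x y : ℝ) :
    star ((x : ℍ[ℝ]) + y • I) = x + (-y) • I := by
  rw [star_add, star_coe, Quaternion.star_smul, star_eq_neg_of_mem_SpH hI, smul_neg, neg_smul]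

theorem mul_eq_star_mul_of_mem_sliceL {I J p : ℍ[ℝ]} (hI : I ∈ SpH) (hIJ : I * J = -(J * I))
    (hp : p ∈ sliceL I) : J * p = star p * J := by
  obtain ⟨x, y, rfl⟩ := hp
  rw [star_add_smul hI, mul_add, add_mul, mul_smul_comm, smul_mul_assoc, (coe_commute x J).eq,
    neg_smul, ← smul_neg, hIJ, neg_neg]

theorem star_mem_of_mem_sliceL {Ω : Set ℍ[ℝ]} (hax : AxSymm Ω) {I z : ℍ[ℝ]} (hI : I ∈ SpH)
    (hz : z ∈ Ω ∩ sliceL I) : star z ∈ Ω ∩ sliceL I := by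
  obtain ⟨hzΩ, x, y, rfl⟩ := hz
  refine ⟨?_, x, -y, star_add_smul hI x y⟩
  simpa [star_add_smul hI, neg_smul] using hax x y I hI hzΩ (-I) (neg_mem_SpH hI)

theorem splitting_formula_eq {J F G H K H' K' : ℍ[ℝ]} (hJ : J * J = -1)
    (hH' : J * H' = star H' * J) (hK' : J * K' = star K' * J) :
    (F * H - G * star K') + (F * K + G * star H') * J =
      F * (H + K * J) + G * J * (H' + K' * J) := by
  rw [mul_assoc G J, mul_add J, ← mul_assoc J K', hH', hK', mul_assoc _ J J, hJ]
  noncomm_ring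

theorem mul_add_mul_mul_eq {I J F G : ℍ[ℝ]} (hI : I * I = -1) (hIJ : I * J = -(J * I))
    (hF : Commute F I) (hG : Commute G I) : I * (F + G * J) * I = -F + G * J := by
  rw [mul_add, add_mul, ← hF.eq, mul_assoc F, hI, ← mul_assoc, ← hG.eq, mul_assoc G, mul_assoc G,
    hIJ, neg_mul, mul_assoc, hI]
  noncomm_ring

-- `two_ne_zero` does not apply: there is no `NeZero (2 : ℍ[ℝ])` instance.
theorem quaternion_two_ne_zero : (2 : ℍ[ℝ]) ≠ 0 := by
  have h : ((2 : ℝ) : ℍ[ℝ]) ≠ 0 := (coe_injective (R := ℝ)).ne (two_ne_zero (α := ℝ))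
  exact_mod_cast h

theorem sub_mul_mul_eq_and_add_mul_mul_eq {I J L F₁ G₁ F₂ G₂ u : ℍ[ℝ]} (hI : I * I = -1)
    (hL : L * L = -1) (hIJ : I * J = -(J * I)) (hF₁ : Commute F₁ I) (hG₁ : Commute G₁ I)
    (hF₂ : Commute F₂ I) (hG₂ : Commute G₂ I)
    (hu : 2 * u = (1 - L * I) * (F₁ + G₁ * J) + (1 + L * I) * (F₂ + G₂ * J)) :
    u - L * u * I = (1 - L * I) * F₁ + (1 + L * I) * (G₂ * J) ∧
      u + L * u * I = (1 - L * I) * (G₁ * J) + (1 + L * I) * F₂ := by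
  have hLuI : 2 * (L * u * I) =
      (1 - L * I) * (-F₁ + G₁ * J) - (1 + L * I) * (-F₂ + G₂ * J) := by
    calc 2 * (L * u * I)
        = L * (1 - L * I) * (F₁ + G₁ * J) * I + L * (1 + L * I) * (F₂ + G₂ * J) * I := by
          rw [show 2 * (L * u * I) = L * (2 * u) * I by noncomm_ring, hu]
          noncomm_ring
      _ = (1 - L * I) * (I * (F₁ + G₁ * J) * I) - (1 + L * I) * (I * (F₂ + G₂ * J) * I) := by
          rw [mul_one_sub_mul_eq hI hL, mul_one_add_mul_eq hI hL]
          noncomm_ring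
      _ = _ := by rw [mul_add_mul_mul_eq hI hIJ hF₁ hG₁, mul_add_mul_mul_eq hI hIJ hF₂ hG₂]
  constructor <;> refine mul_left_cancel₀ quaternion_two_ne_zero ?_
  · rw [mul_sub, hu, hLuI]
    noncomm_ring
  · rw [mul_add, hu, hLuI]
    noncomm_ring

section RegularProduct

variable {Ω : Set ℍ[ℝ]} {f g fg F G H K : ℍ[ℝ] → ℍ[ℝ]} {I J : ℍ[ℝ]}

theorem regProduct_eq_on_slice (hax : AxSymm Ω) (hI : I ∈ SpH) (hJ : J ∈ SpH)
    (hIJ : I * J = -(J * I)) (hHm : Set.MapsTo H (Ω ∩ sliceL I) (sliceL I))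
    (hKm : Set.MapsTo K (Ω ∩ sliceL I) (sliceL I))
    (hgs : ∀ z ∈ Ω ∩ sliceL I, g z = H z + K z * J)
    (hfg : ∀ z ∈ Ω ∩ sliceL I, fg z =
      (F z * H z - G z * star (K (star z))) + (F z * K z + G z * star (H (star z))) * J) :
    ∀ z ∈ Ω ∩ sliceL I, fg z = F z * g z + G z * J * g (star z) := by
  intro z hz
  have hz' := star_mem_of_mem_sliceL hax hI hz
  rw [hfg z hz, hgs z hz, hgs _ hz']
  exact splitting_formula_eq (mul_self_of_mem_SpH hJ)
    (mul_eq_star_mul_of_mem_sliceL hI hIJ (hHm hz'))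
    (mul_eq_star_mul_of_mem_sliceL hI hIJ (hKm hz'))

theorem two_mul_regProduct_eq (hΩ : IsSDomain Ω) (hax : AxSymm Ω) (hf : SliceRegularOn f Ω)
    (hfgreg : SliceRegularOn fg Ω) (hI : I ∈ SpH) (hJ : J ∈ SpH) (hperp : (I * star J).re = 0)
    (hFm : Set.MapsTo F (Ω ∩ sliceL I) (sliceL I)) (hGm : Set.MapsTo G (Ω ∩ sliceL I) (sliceL I))
    (hHm : Set.MapsTo H (Ω ∩ sliceL I) (sliceL I)) (hKm : Set.MapsTo K (Ω ∩ sliceL I) (sliceL I))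
    (hfs : ∀ z ∈ Ω ∩ sliceL I, f z = F z + G z * J)
    (hgs : ∀ z ∈ Ω ∩ sliceL I, g z = H z + K z * J)
    (hfg : ∀ z ∈ Ω ∩ sliceL I, fg z =
      (F z * H z - G z * star (K (star z))) + (F z * K z + G z * star (H (star z))) * J)
    {L : ℍ[ℝ]} (hL : L ∈ SpH) {x y : ℝ} (hq : (x : ℍ[ℝ]) + y • L ∈ Ω) :
    2 * fg (x + y • L) =
      (f (x + y • L) - L * f (x + y • L) * I) * g (x + y • I) +
        (f (x + y • L) + L * f (x + y • L) * I) * g (x + (-y) • I) := by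
  have hIJ := mul_eq_neg_mul_of_perp hI hJ hperp
  have hz : (x : ℍ[ℝ]) + y • I ∈ Ω ∩ sliceL I := ⟨hax x y L hL hq I hI, x, y, rfl⟩
  have hz' := star_mem_of_mem_sliceL hax hI hz
  have hstar : star ((x : ℍ[ℝ]) + (-y) • I) = x + y • I := by rw [star_add_smul hI, neg_neg]
  rw [star_add_smul hI] at hz'
  have hfq := hf.representation_formula hΩ hax hI hL hq
  rw [hfs _ hz, hfs _ hz'] at hfq
  obtain ⟨hsub, hadd⟩ := sub_mul_mul_eq_and_add_mul_mul_eq (mul_self_of_mem_SpH hI)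
    (mul_self_of_mem_SpH hL) hIJ (commute_of_mem_sliceL (hFm hz)) (commute_of_mem_sliceL (hGm hz))
    (commute_of_mem_sliceL (hFm hz')) (commute_of_mem_sliceL (hGm hz')) hfq
  have hprod := regProduct_eq_on_slice hax hI hJ hIJ hHm hKm hgs hfg
  rw [hfgreg.representation_formula hΩ hax hI hL hq, hprod _ hz, hprod _ hz', star_add_smul hI,
    hstar, hsub, hadd]
  noncomm_ring

end RegularProduct

theorem inv_mul_add_smul_mul {u : ℍ[ℝ]} (hu : u ≠ 0) (x y : ℝ) (L : ℍ[ℝ]) :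
    u⁻¹ * ((x : ℍ[ℝ]) + y • L) * u = x + y • (u⁻¹ * L * u) := by
  rw [mul_add, add_mul, ← coe_commutes, mul_assoc, inv_mul_cancel₀ hu, mul_one, mul_smul_comm,
    smul_mul_assoc]

theorem mul_one_sub_add_conj_mul {u : ℍ[ℝ]} (hu : u ≠ 0) (L I a b : ℍ[ℝ]) :
    u * ((1 - u⁻¹ * L * u * I) * a + (1 + u⁻¹ * L * u * I) * b) =
      (u - L * u * I) * a + (u + L * u * I) * b := by
  have h : u * (u⁻¹ * L * u * I) = L * u * I := by
    rw [← mul_assoc, ← mul_assoc, ← mul_assoc, mul_inv_cancel₀ hu, one_mul]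
  rw [mul_add, ← mul_assoc, ← mul_assoc, mul_sub, mul_add, mul_one, h]

theorem product_formula_general
    (Ω : Set ℍ[ℝ]) (hΩ : IsSDomain Ω) (hax : AxSymm Ω)
    (f g : ℍ[ℝ] → ℍ[ℝ]) (hf : SliceRegularOn f Ω) (hg : SliceRegularOn g Ω)
    (I J : ℍ[ℝ]) (hI : I ∈ SpH) (hJ : J ∈ SpH) (hperp : (I * star J).re = 0)
    (F G H K : ℍ[ℝ] → ℍ[ℝ])
    (hFm : Set.MapsTo F (Ω ∩ sliceL I) (sliceL I))
    (hGm : Set.MapsTo G (Ω ∩ sliceL I) (sliceL I))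
    (hHm : Set.MapsTo H (Ω ∩ sliceL I) (sliceL I))
    (hKm : Set.MapsTo K (Ω ∩ sliceL I) (sliceL I))
    (hfs : ∀ z ∈ Ω ∩ sliceL I, f z = F z + G z * J)
    (hgs : ∀ z ∈ Ω ∩ sliceL I, g z = H z + K z * J)
    -- `fg` is the regular product `f ∗ g`
    (fg : ℍ[ℝ] → ℍ[ℝ]) (hfgreg : SliceRegularOn fg Ω)
    (hfg : ∀ z ∈ Ω ∩ sliceL I, fg z =
      (F z * H z - G z * star (K (star z))) +
        (F z * K z + G z * star (H (star z))) * J) :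
    ∀ q ∈ Ω, (f q ≠ 0 → fg q = f q * g ((f q)⁻¹ * q * f q)) ∧ (f q = 0 → fg q = 0) := by
  intro q hq
  obtain ⟨x, y, L, hL, rfl⟩ := exists_mem_SpH_eq_add_smul q
  have key := two_mul_regProduct_eq hΩ hax hf hfgreg hI hJ hperp hFm hGm hHm hKm hfs hgs hfg hL hq
  refine ⟨fun hu => mul_left_cancel₀ quaternion_two_ne_zero ?_, fun hu => ?_⟩
  · have hL' := inv_mul_mul_mem_SpH hu hL
    have hg' := hg.representation_formula hΩ hax hI hL' (hax x y L hL hq _ hL')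
    rw [key, inv_mul_add_smul_mul hu, ← mul_one_sub_add_conj_mul hu, ← hg', ← mul_assoc,
      ← mul_assoc, (Commute.ofNat_right _ 2).eq]
  · refine mul_left_cancel₀ quaternion_two_ne_zero ?_
    rw [key, hu]
    simp

/-- `f ∗ g (q) = f(q) g(f(q)⁻¹ q f(q))`. -/
theorem product_formula
    (Ω : Set ℍ[ℝ]) (hΩ : IsSDomain Ω) (hax : AxSymm Ω)
    (f g : ℍ[ℝ] → ℍ[ℝ]) (hf : SliceRegularOn f Ω) (hg : SliceRegularOn g Ω)
    (I J : ℍ[ℝ]) (hI : I ∈ SpH) (hJ : J ∈ SpH) (hperp : (I * star J).re = 0)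
    (F G H K : ℍ[ℝ] → ℍ[ℝ])
    (hF : SliceHolomorphicOn I F (Ω ∩ sliceL I)) (hFm : Set.MapsTo F (Ω ∩ sliceL I) (sliceL I))
    (hG : SliceHolomorphicOn I G (Ω ∩ sliceL I)) (hGm : Set.MapsTo G (Ω ∩ sliceL I) (sliceL I))
    (hH : SliceHolomorphicOn I H (Ω ∩ sliceL I)) (hHm : Set.MapsTo H (Ω ∩ sliceL I) (sliceL I))
    (hK : SliceHolomorphicOn I K (Ω ∩ sliceL I)) (hKm : Set.MapsTo K (Ω ∩ sliceL I) (sliceL I))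
    (hfs : ∀ z ∈ Ω ∩ sliceL I, f z = F z + G z * J)
    (hgs : ∀ z ∈ Ω ∩ sliceL I, g z = H z + K z * J)
    -- `fg` is the regular product `f ∗ g`
    (fg : ℍ[ℝ] → ℍ[ℝ]) (hfgreg : SliceRegularOn fg Ω)
    (hfg : ∀ z ∈ Ω ∩ sliceL I, fg z =
      (F z * H z - G z * star (K (star z))) +
        (F z * K z + G z * star (H (star z))) * J) :
    ∀ q ∈ Ω, (f q ≠ 0 → fg q = f q * g ((f q)⁻¹ * q * f q)) ∧ (f q = 0 → fg q = 0) :=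
  product_formula_general Ω hΩ hax f g hf hg I J hI hJ hperp F G H K hFm hGm hHm hKm hfs hgs fg
    hfgreg hfg
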